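/- Let y : [T, T⁺] → [0,∞) be absolutely continuous and χ ∈ L¹(T,T⁺) nonnegative. Suppose 1 < γ ≤ 2 and y'(t) ≤ χ(t)(y(t) + y(t)^{2/γ}) for a.e. t ∈ (T, T⁺). If exp(2∫_T^{T⁺} χ(s) ds) · y(T) ≤ 1, then for all τ ∈ (T, T⁺], y(τ) ≤ exp(2∫_T^τ χ(s) ds) · y(T). -/

import Mathlib

/-!
Where `y ≤ 1`, the hypothesis gives `y' ≤ 2χy` because `y ^ (2/γ) ≤ y`, and the linear Gronwall
inequality (for absolutely continuous functions: `exp (-2∫χ) y` has a.e. nonpositive derivative)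
gives `y ≤ exp (2∫_T^t χ) y(T) ≤ 1`. A continuous induction then shows that `y ≤ 1` on all of
`[T, T⁺]`: the set `{y ≤ 1}` is closed, and it extends to the right of any `t` up to which it
holds, either by continuity when `y t < 1`, or, when `y t = 1`, because the chain
`1 = y t ≤ exp (2∫_T^t χ) y(T) ≤ exp (2∫_T^{T⁺} χ) y(T) ≤ 1` forces `∫_t^{T⁺} χ = 0`, so that
`y' ≤ 0` a.e. after `t`.
-/

open MeasureTheory Set Filter Real Topology

theorem LipschitzOnWith.comp_absolutelyContinuousOnInterval {X Y : Type*} [PseudoMetricSpace X]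
    [PseudoMetricSpace Y] {g : Y → X} {f : ℝ → Y} {K : NNReal} {s : Set Y} {a b : ℝ}
    (hg : LipschitzOnWith K g s) (hfs : MapsTo f (uIcc a b) s)
    (hf : AbsolutelyContinuousOnInterval f a b) :
    AbsolutelyContinuousOnInterval (g ∘ f) a b := by
  unfold AbsolutelyContinuousOnInterval at hf ⊢
  have hKf := mul_zero (K : ℝ) ▸ hf.const_mul (K : ℝ)
  refine squeeze_zero' (Eventually.of_forall fun _ ↦ Finset.sum_nonneg fun _ _ ↦ dist_nonneg) ?_ hKf
  filter_upwards [mem_inf_of_right (mem_principal_self _)] with E hE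
  rw [Finset.mul_sum]
  gcongr with i hi
  exact hg.dist_le_mul _ (hfs (hE.1 i hi).1) _ (hfs (hE.1 i hi).2)

theorem ContDiff.comp_absolutelyContinuousOnInterval {g f : ℝ → ℝ} {a b : ℝ}
    (hg : ContDiff ℝ 1 g) (hf : AbsolutelyContinuousOnInterval f a b) :
    AbsolutelyContinuousOnInterval (g ∘ f) a b := by
  obtain ⟨C, hC⟩ := hf.exists_bound
  obtain ⟨K, hK⟩ := hg.contDiffOn.exists_lipschitzOnWith one_ne_zero (convex_Icc (-C) C)
    isCompact_Icc
  exact hK.comp_absolutelyContinuousOnInterval (fun x hx ↦ abs_le.mp (hC x hx)) hf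

theorem eq_add_intervalIntegral_of_forall_eq_add_intervalIntegral {u f : ℝ → ℝ} {a b s t : ℝ}
    (hf : IntervalIntegrable f volume a b) (hu : ∀ t ∈ Icc a b, u t = u a + ∫ x in a..t, f x)
    (hs : s ∈ Icc a b) (ht : t ∈ Icc a b) : u t = u s + ∫ x in s..t, f x := by
  have hsub {c d : ℝ} (hc : c ∈ Icc a b) (hd : d ∈ Icc a b) : uIcc c d ⊆ uIcc a b :=
    uIcc_subset_uIcc (Icc_subset_uIcc hc) (Icc_subset_uIcc hd)
  rw [hu t ht, hu s hs, add_assoc, intervalIntegral.integral_add_adjacent_intervals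
    (hf.mono_set (hsub (left_mem_Icc.2 (hs.1.trans hs.2)) hs)) (hf.mono_set (hsub hs ht))]

theorem continuousOn_of_forall_eq_add_intervalIntegral {u f : ℝ → ℝ} {a b : ℝ}
    (hf : IntervalIntegrable f volume a b) (hu : ∀ t ∈ Icc a b, u t = u a + ∫ x in a..t, f x) :
    ContinuousOn u (Icc a b) := by
  rcases le_total a b with hab | hba
  · refine ContinuousOn.congr ?_ hu
    simpa only [uIcc_of_le hab] using
      (hf.absolutelyContinuousOnInterval_intervalIntegral left_mem_uIcc).continuousOn.const_add _
  · exact (subsingleton_Icc_of_ge hba).continuousOn u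

theorem le_exp_integral_mul_of_ae_le_mul {u f β : ℝ → ℝ} {a b : ℝ} (hab : a ≤ b)
    (hf : IntervalIntegrable f volume a b) (hβ : IntervalIntegrable β volume a b)
    (hu : ∀ t ∈ Icc a b, u t = u a + ∫ s in a..t, f s)
    (hle : ∀ᵐ t, t ∈ Ioo a b → f t ≤ β t * u t) :
    u b ≤ exp (∫ s in a..b, β s) * u a := by
  set U : ℝ → ℝ := fun t ↦ u a + ∫ s in a..t, f s
  set B : ℝ → ℝ := fun t ↦ ∫ s in a..t, β s
  set z : ℝ → ℝ := fun t ↦ exp (-B t) * U t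
  have ha : a ∈ uIcc a b := left_mem_uIcc
  have hz : AbsolutelyContinuousOnInterval z a b :=
    (contDiff_exp.comp_absolutelyContinuousOnInterval
      (hβ.absolutelyContinuousOnInterval_intervalIntegral ha).fun_neg).fun_mul
    ((LipschitzWith.const (u a)).lipschitzOnWith.absolutelyContinuousOnInterval.fun_add
      (hf.absolutelyContinuousOnInterval_intervalIntegral ha))
  have hz' : ∀ᵐ t, t ∈ Ioc a b → deriv z t ≤ 0 := by
    filter_upwards [hf.ae_hasDerivAt_integral, hβ.ae_hasDerivAt_integral, hle,
      Measure.ae_ne volume b] with t hfU hβB hfβ htb ht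
    have htab : t ∈ Ioo a b := ⟨ht.1, lt_of_le_of_ne ht.2 htb⟩
    have htu : t ∈ uIcc a b := Icc_subset_uIcc (Ioo_subset_Icc_self htab)
    have hzt : HasDerivAt z (exp (-B t) * -β t * U t + exp (-B t) * f t) t :=
      ((hβB htu a ha).neg.exp).mul ((hfU htu a ha).const_add (u a))
    have hUt : U t = u t := (hu t (Ioo_subset_Icc_self htab)).symm
    have : f t - β t * U t ≤ 0 := by rw [hUt]; linarith [hfβ htab]
    rw [hzt.deriv]
    nlinarith [exp_pos (-B t)]
  have hzab : z b ≤ z a := by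
    have hint : ∫ t in a..b, deriv z t ≤ 0 := by
      rw [intervalIntegral.integral_of_le hab]
      exact setIntegral_nonpos_ae measurableSet_Ioc hz'
    linarith [hz.integral_deriv_eq_sub]
  simp only [z, U, B, intervalIntegral.integral_same, neg_zero, exp_zero, add_zero,
    one_mul, ← hu b (right_mem_Icc.2 hab)] at hzab
  rwa [exp_neg, inv_mul_le_iff₀ (exp_pos _)] at hzab

theorem le_of_ae_le_mul_of_integral_eq_zero {u f χ g : ℝ → ℝ} {a b : ℝ} (hab : a ≤ b)
    (hχ : IntervalIntegrable χ volume a b) (hχnn : ∀ t, 0 ≤ χ t)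
    (hu : ∀ t ∈ Icc a b, u t = u a + ∫ s in a..t, f s)
    (hle : ∀ᵐ t, t ∈ Ioo a b → f t ≤ χ t * g t) (hχ0 : ∫ s in a..b, χ s = 0) :
    ∀ t ∈ Icc a b, u t ≤ u a := by
  rw [intervalIntegral.integral_of_le hab] at hχ0
  have hχae := (ae_restrict_iff' measurableSet_Ioc).1
    ((integral_eq_zero_iff_of_nonneg_ae (ae_of_all _ hχnn) hχ.1).1 hχ0)
  intro t ht
  have hint : ∫ s in a..t, f s ≤ 0 := by
    rw [intervalIntegral.integral_of_le ht.1]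
    refine setIntegral_nonpos_ae measurableSet_Ioc ?_
    filter_upwards [hle, hχae, Measure.ae_ne volume b] with s hfs hχs hsb hs
    have hsb' : s ≤ b := hs.2.trans ht.2
    simpa [hχs ⟨hs.1, hsb'⟩] using hfs ⟨hs.1, lt_of_le_of_ne hsb' hsb⟩
  linarith [hu t ht]

section Forecast

variable {T Tp p : ℝ} {y y' χ : ℝ → ℝ}

theorem le_exp_two_mul_integral_of_le_one (hp : 1 ≤ p) (hynn : ∀ t ∈ Icc T Tp, 0 ≤ y t)
    (hχ : IntervalIntegrable χ volume T Tp) (hχnn : ∀ t, 0 ≤ χ t)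
    (hy' : IntervalIntegrable y' volume T Tp)
    (hAC : ∀ t ∈ Icc T Tp, y t = y T + ∫ s in T..t, y' s)
    (hineq : ∀ᵐ t, t ∈ Ioo T Tp → y' t ≤ χ t * (y t + y t ^ p))
    {b : ℝ} (hb : b ∈ Icc T Tp) (hy1 : ∀ t ∈ Icc T b, y t ≤ 1) :
    y b ≤ exp (2 * ∫ s in T..b, χ s) * y T := by
  have hsub : uIcc T b ⊆ uIcc T Tp := uIcc_subset_uIcc left_mem_uIcc (Icc_subset_uIcc hb)
  rw [← intervalIntegral.integral_const_mul]
  refine le_exp_integral_mul_of_ae_le_mul hb.1 (hy'.mono_set hsub) ((hχ.mono_set hsub).const_mul 2)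
    (fun t ht ↦ hAC t ⟨ht.1, ht.2.trans hb.2⟩) ?_
  filter_upwards [hineq] with t ht htb
  have hyt := hy1 t (Ioo_subset_Icc_self htb)
  have hpow := rpow_le_self_of_le_one (hynn t ⟨htb.1.le, htb.2.le.trans hb.2⟩) hyt hp
  nlinarith [ht ⟨htb.1, htb.2.trans_le hb.2⟩, hχnn t]

theorem eventually_le_one_nhdsGT (hp : 1 ≤ p) (hynn : ∀ t ∈ Icc T Tp, 0 ≤ y t)
    (hχ : IntervalIntegrable χ volume T Tp) (hχnn : ∀ t, 0 ≤ χ t)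
    (hy' : IntervalIntegrable y' volume T Tp)
    (hAC : ∀ t ∈ Icc T Tp, y t = y T + ∫ s in T..t, y' s)
    (hineq : ∀ᵐ t, t ∈ Ioo T Tp → y' t ≤ χ t * (y t + y t ^ p))
    (hsmall : exp (2 * ∫ s in T..Tp, χ s) * y T ≤ 1)
    {t : ℝ} (ht : t ∈ Ico T Tp) (hy1 : ∀ s ∈ Icc T t, y s ≤ 1) :
    ∀ᶠ s in 𝓝[>] t, y s ≤ 1 := by
  have htmem : t ∈ Icc T Tp := Ico_subset_Icc_self ht
  have hχt : IntervalIntegrable χ volume t Tp :=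
    hχ.mono_set (uIcc_subset_uIcc (Icc_subset_uIcc htmem) right_mem_uIcc)
  have hsplit := intervalIntegral.integral_add_adjacent_intervals
    (hχ.mono_set (uIcc_subset_uIcc left_mem_uIcc (Icc_subset_uIcc htmem))) hχt
  have hI : 0 ≤ ∫ s in t..Tp, χ s := intervalIntegral.integral_nonneg ht.2.le fun s _ ↦ hχnn s
  rw [← hsplit, mul_add, exp_add] at hsmall
  have hexp : exp (2 * ∫ s in T..t, χ s) * y T ≤ 1 := by
    nlinarith [one_le_exp (mul_nonneg zero_le_two hI), exp_pos (2 * ∫ s in T..t, χ s),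
      hynn T (left_mem_Icc.2 (ht.1.trans ht.2.le))]
  have hyt := le_exp_two_mul_integral_of_le_one hp hynn hχ hχnn hy' hAC hineq htmem hy1
  rcases (hyt.trans hexp).lt_or_eq with hlt | heq
  · have hcont := continuousOn_of_forall_eq_add_intervalIntegral hy' hAC t htmem
    exact (hcont.mono_of_mem_nhdsWithin (mem_of_superset (Icc_mem_nhdsGT ht.2)
      (Icc_subset_Icc_left ht.1))).tendsto.eventually (eventually_le_nhds hlt)
  · have hzero : ∫ s in t..Tp, χ s = 0 := by
      have : exp (2 * ∫ s in t..Tp, χ s) ≤ 1 := by nlinarith [exp_pos (2 * ∫ s in t..Tp, χ s)]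
      linarith [exp_le_one_iff.1 this]
    have hmono := le_of_ae_le_mul_of_integral_eq_zero ht.2.le hχt hχnn
      (fun s hs ↦ eq_add_intervalIntegral_of_forall_eq_add_intervalIntegral hy' hAC htmem
        ⟨ht.1.trans hs.1, hs.2⟩)
      (hineq.mono fun s hs hst ↦ hs ⟨ht.1.trans_lt hst.1, hst.2⟩) hzero
    filter_upwards [Icc_mem_nhdsGT ht.2] with s hs using (hmono s hs).trans heq.le

theorem le_one_of_exp_two_mul_integral_mul_le_one (hp : 1 ≤ p)
    (hynn : ∀ t ∈ Icc T Tp, 0 ≤ y t) (hχ : IntervalIntegrable χ volume T Tp)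
    (hχnn : ∀ t, 0 ≤ χ t) (hy' : IntervalIntegrable y' volume T Tp)
    (hAC : ∀ t ∈ Icc T Tp, y t = y T + ∫ s in T..t, y' s)
    (hineq : ∀ᵐ t, t ∈ Ioo T Tp → y' t ≤ χ t * (y t + y t ^ p))
    (hsmall : exp (2 * ∫ s in T..Tp, χ s) * y T ≤ 1) :
    ∀ t ∈ Icc T Tp, y t ≤ 1 := by
  intro τ hτ
  have hTTp : T ≤ Tp := hτ.1.trans hτ.2
  have hyT : y T ≤ 1 := by
    have : 1 ≤ exp (2 * ∫ s in T..Tp, χ s) := one_le_exp (mul_nonneg zero_le_two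
      (intervalIntegral.integral_nonneg hTTp fun t _ ↦ hχnn t))
    nlinarith [hynn T (left_mem_Icc.2 hTTp)]
  have hclosed : IsClosed ({t | y t ≤ 1} ∩ Icc T Tp) := inter_comm _ _ ▸
    (continuousOn_of_forall_eq_add_intervalIntegral hy' hAC).preimage_isClosed_of_isClosed
      isClosed_Icc isClosed_Iic
  exact hclosed.Icc_subset_of_forall_mem_nhdsGT_of_Icc_subset hyT
    (fun t ht hy1 ↦ eventually_le_one_nhdsGT hp hynn hχ hχnn hy' hAC hineq hsmall ht hy1) hτ

end Forecast

/-- the nonlinear Gronwall estimate (C3)–(C5) in the prediction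
period: if `y' ≤ χ (y + y^{2/γ})` a.e. on `(T, T⁺)` with `1 < γ ≤ 2` and
`e^{2∫_T^{T⁺} χ} y(T) ≤ 1`, then `y(τ) ≤ e^{2∫_T^τ χ} y(T)` on `(T, T⁺]`. -/
theorem gronwall_forecast
    (T Tp γ : ℝ) (hTT : T < Tp) (hγ1 : 1 < γ) (hγ2 : γ ≤ 2)
    (y y' χ : ℝ → ℝ)
    (hynn : ∀ t ∈ Set.Icc T Tp, 0 ≤ y t)
    (hχint : IntegrableOn χ (Set.Ioc T Tp))
    (hχnn : ∀ t, 0 ≤ χ t)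
    (hy'int : IntegrableOn y' (Set.Icc T Tp))
    (hAC : ∀ t ∈ Set.Icc T Tp, y t = y T + ∫ s in T..t, y' s)
    (hineq : ∀ᵐ t ∂(volume.restrict (Set.Ioo T Tp)),
      y' t ≤ χ t * (y t + y t ^ ((2:ℝ)/γ)))
    (hsmall : Real.exp (2 * ∫ s in T..Tp, χ s) * y T ≤ 1) :
    ∀ τ ∈ Set.Ioc T Tp,
      y τ ≤ Real.exp (2 * ∫ s in T..τ, χ s) * y T := by
  intro τ hτ
  have hp : 1 ≤ 2 / γ := (one_le_div (by linarith)).2 hγ2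
  have hχ : IntervalIntegrable χ volume T Tp :=
    (intervalIntegrable_iff_integrableOn_Ioc_of_le hTT.le).2 hχint
  have hy' : IntervalIntegrable y' volume T Tp :=
    IntegrableOn.intervalIntegrable (by rwa [uIcc_of_le hTT.le])
  have hineq' := (ae_restrict_iff' measurableSet_Ioo).1 hineq
  have hle1 := le_one_of_exp_two_mul_integral_mul_le_one hp hynn hχ hχnn hy' hAC hineq' hsmall
  exact le_exp_two_mul_integral_of_le_one hp hynn hχ hχnn hy' hAC hineq' (Ioc_subset_Icc_self hτ)
    fun t ht ↦ hle1 t ⟨ht.1, ht.2.trans hτ.2⟩
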